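/- For every permutation π of length n, every integer 0 ≤ k ≤ n, and every positive integer t, P^t(π)|_k ∈ T^t(π|_k), where T^t(w) denotes the set of words reachable from w by t tumble moves. -/

import Mathlib

/-- Flip operator `F`: simultaneously reverse every (automatically pairwise disjoint)
`10` factor, i.e. every zero immediately preceded by a one swaps with that one.
Here `false` plays the role of `0` and `true` of `1`. -/
def flipWord : List Bool → List Bool
  | true :: false :: rest => false :: true :: flipWord rest
  | a :: rest => a :: flipWord rest
  | [] => []

/-- The positions (indices) of the zeros (`false`) of a binary word, left to right. -/
def zeroPositions (w : List Bool) : List ℕ :=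
  (List.range w.length).filter (fun i => w.getD i true = false)

/-- `u ⊴ v` : for every `i`, the `i`-th zero of `u` occurs at a position at most
that of the `i`-th zero of `v`. -/
def WLE (u v : List Bool) : Prop :=
  List.Forall₂ (· ≤ ·) (zeroPositions u) (zeroPositions v)

/-- One tumble move: choose pairwise non-overlapping factors of the form `1^+0^+`
covering every `10` factor, and reverse each in place. `Tumble w u` means `u ∈ T(w)`. -/
inductive Tumble : List Bool → List Bool → Prop
  | nil : Tumble [] []
  | zero {w u} : Tumble w u → Tumble (false :: w) (false :: u)
  | one {w u} : Tumble w u → w.head? ≠ some false → Tumble (true :: w) (true :: u)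
  | block {w u} (a b : ℕ) : 0 < a → 0 < b → Tumble w u →
      Tumble (List.replicate a true ++ List.replicate b false ++ w)
             (List.replicate b false ++ List.replicate a true ++ u)

/-- `TumbleN t w u` : `u` is reachable from `w` by exactly `t` tumble moves. -/
def TumbleN : ℕ → List Bool → List Bool → Prop
  | 0 => Eq
  | t + 1 => fun w u => ∃ v, TumbleN t w v ∧ Tumble v u

/-- The 0/1 projection at threshold `k`: the `i`-th letter is `0` iff `w(i) < k`. -/
def proj (k : ℕ) (w : List ℕ) : List Bool := w.map (fun x => decide (k ≤ x))

/-- Pop-stack operator `P`: partition into maximal strictly decreasing runs and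
reverse each run in place. -/
def popStack (w : List ℕ) : List ℕ :=
  ((w.splitBy (fun a b => decide (b < a))).map List.reverse).flatten

/-
Cut `w` into its maximal decreasing runs. The projection of a decreasing run is `1^a 0^b`,
and `P` turns it into `0^b 1^a`: one tumble of that block. Consecutive runs meet at a
weak ascent, so when `b = 0` the run ends in a letter `≥ k` and the next run starts with
a `1`; leaving the `1^a` in place then uncovers no `10` factor. Hence `P(w)|ₖ ∈ T(w|ₖ)`,
and iterating gives the theorem.
-/

namespace Tumble

lemma replicate_false_append (b : ℕ) {w u : List Bool} (h : Tumble w u) :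
    Tumble (List.replicate b false ++ w) (List.replicate b false ++ u) := by
  induction b with
  | zero => simpa
  | succ n ih => simpa [List.replicate_succ] using ih.zero

lemma replicate_true_append (a : ℕ) {w u : List Bool} (h : Tumble w u)
    (hw : w.head? ≠ some false) :
    Tumble (List.replicate a true ++ w) (List.replicate a true ++ u) := by
  induction a with
  | zero => simpa
  | succ n ih =>
    have hhead : (List.replicate n true ++ w).head? ≠ some false := by
      cases n <;> simp_all [List.replicate_succ]
    simpa [List.replicate_succ] using ih.one hhead

lemma reverse_block_append (a b : ℕ) {w u : List Bool} (h : Tumble w u)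
    (hw : b = 0 → w.head? ≠ some false) :
    Tumble (List.replicate a true ++ List.replicate b false ++ w)
      (List.replicate b false ++ List.replicate a true ++ u) := by
  rcases Nat.eq_zero_or_pos a with rfl | ha
  · simpa using replicate_false_append b h
  rcases Nat.eq_zero_or_pos b with rfl | hb
  · simpa using replicate_true_append a h (hw rfl)
  exact block a b ha hb h

end Tumble

lemma List.exists_eq_replicate_true_append_replicate_false {v : List Bool}
    (hv : v.IsChain (· ≥ ·)) :
    ∃ a b, v = List.replicate a true ++ List.replicate b false := by
  induction v with
  | nil => exact ⟨0, 0, rfl⟩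
  | cons x rest ih =>
    obtain ⟨a, b, rfl⟩ := ih hv.tail
    cases x with
    | true => exact ⟨a + 1, b, rfl⟩
    | false =>
      cases a with
      | zero => exact ⟨0, b + 1, rfl⟩
      | succ a => exact absurd (List.isChain_cons_cons.1 hv).1 (by decide)

lemma exists_proj_eq_replicate_of_isChain_gt (k : ℕ) {g : List ℕ} (hg : g.IsChain (· > ·)) :
    ∃ a b, proj k g = List.replicate a true ++ List.replicate b false := by
  refine List.exists_eq_replicate_true_append_replicate_false ?_
  refine (List.isChain_map _).2 (hg.imp fun x y hxy => ?_)
  by_cases hy : k ≤ y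
  · simp [hy, hy.trans hxy.le]
  · simp [hy]

lemma proj_reverse (k : ℕ) (w : List ℕ) : proj k w.reverse = (proj k w).reverse :=
  List.map_reverse ..

lemma proj_flatten (k : ℕ) (L : List (List ℕ)) :
    proj k L.flatten = (L.map (proj k)).flatten :=
  List.map_flatten ..

lemma tumble_proj_flatten_of_isChain (k : ℕ) {L : List (List ℕ)}
    (hrun : ∀ g ∈ L, g.IsChain (· > ·))
    (hbd : L.IsChain fun g h => ∃ hg hh, g.getLast hg ≤ h.head hh) :
    Tumble (L.map (proj k)).flatten (L.map fun g => proj k g.reverse).flatten := by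
  induction L with
  | nil => exact Tumble.nil
  | cons g L ih =>
    obtain ⟨a, b, hab⟩ := exists_proj_eq_replicate_of_isChain_gt k (hrun g List.mem_cons_self)
    have hrev : proj k g.reverse = List.replicate b false ++ List.replicate a true := by
      rw [proj_reverse, hab]
      simp
    have hnext : b = 0 → (L.map (proj k)).flatten.head? ≠ some false := by
      rintro rfl
      cases L with
      | nil => simp
      | cons h L =>
        obtain ⟨hg, hh, hle⟩ := (List.isChain_cons_cons.1 hbd).1
        have hlast : k ≤ g.getLast hg := by
          have hmem : decide (k ≤ g.getLast hg) ∈ proj k g :=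
            List.mem_map_of_mem (List.getLast_mem hg)
          simp only [hab, List.append_nil, List.replicate_zero] at hmem
          simpa using List.eq_of_mem_replicate hmem
        obtain ⟨x, h, rfl⟩ := List.exists_cons_of_ne_nil hh
        have hkx : k ≤ x := hlast.trans hle
        simp [proj, hkx]
    have htail := ih (fun g hg => hrun g (List.mem_cons_of_mem _ hg)) hbd.tail
    simpa [hab, hrev] using Tumble.reverse_block_append a b htail hnext

lemma tumble_proj_popStack (k : ℕ) (w : List ℕ) : Tumble (proj k w) (proj k (popStack w)) := by
  have hruns : ∀ g ∈ w.splitBy (fun a b => decide (b < a)), g.IsChain (· > ·) :=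
    fun _ hg => (List.isChain_of_mem_splitBy hg).imp fun _ _ h => by simpa using h
  have hbd : (w.splitBy fun a b => decide (b < a)).IsChain
      fun g h => ∃ hg hh, g.getLast hg ≤ h.head hh :=
    (List.isChain_getLast_head_splitBy _ w).imp fun _ _ ⟨hg, hh, hnlt⟩ =>
      ⟨hg, hh, by simpa using hnlt⟩
  have key := tumble_proj_flatten_of_isChain k hruns hbd
  rw [← proj_flatten, List.flatten_splitBy] at key
  rwa [popStack, proj_flatten, List.map_map]

theorem stmt11_general (k t : ℕ) (π : List ℕ) :
    TumbleN t (proj k π) (proj k (popStack^[t] π)) := by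
  induction t with
  | zero => rfl
  | succ t ih =>
    rw [Function.iterate_succ_apply']
    exact ⟨_, ih, tumble_proj_popStack k _⟩

/-- For every permutation `π` of length `n`, `0 ≤ k ≤ n` and `t ≥ 1`,
`P^t(π)|ₖ ∈ T^t(π|ₖ)`. -/
theorem stmt11 (n k t : ℕ) (π : List ℕ) (h : π.Perm (List.range' 1 n))
    (hk : k ≤ n) (ht : 1 ≤ t) :
    TumbleN t (proj k π) (proj k (popStack^[t] π)) :=
  stmt11_general k t π
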